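/- arXiv:1602.00183 — 4 statements merged into one kernel-verified Lean document; each statement's English description precedes it below -/
import Mathlib

section
/- Let h : ℝ → ℝ be six times continuously differentiable in a neighborhood of x ∈ ℝ and let s ∈ ℝ be fixed. Then the approximate-coefficient MQ-RBF reconstruction satisfies (1/2 + (1/4)·s·Δx²)·(h̄₀ + h̄₊) = h(x) + ((1/2)·s·h(x) + (1/6)·h''(x))·Δx² + ((1/12)·s·h''(x) + (1/120)·h⁽⁴⁾(x))·Δx⁴ + O(Δx⁶). -/
/-!
Put `g t = h (x + t) + h (x - t)`. Then `h̄₀ + h̄₊ = Δx⁻¹ ∫₀^Δx g`, and Taylor's theorem at `x`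
to order six, applied at `t` and `-t`, kills the odd terms:
`g t = 2 h + h'' t² + h⁽⁴⁾ t⁴ / 12 + O(t⁶)`. Averaging over `[0, Δx]` keeps the error `O(Δx⁶)` and
gives `h̄₀ + h̄₊ = 2 h + h'' Δx² / 3 + h⁽⁴⁾ Δx⁴ / 60 + O(Δx⁶)`. Multiplying by the bounded
coefficient `1/2 + sΔx²/4` yields the claimed terms plus `s h⁽⁴⁾ Δx⁶ / 240`, which is again `O(Δx⁶)`.
-/

open Filter Topology Asymptotics Finset MeasureTheory intervalIntegral
open scoped Nat

theorem ContDiffAt.isLittleO_sub_taylor {E : Type*} [NormedAddCommGroup E] [NormedSpace ℝ E]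
    {f : ℝ → E} {x : ℝ} {n : ℕ} (hf : ContDiffAt ℝ n f x) :
    (fun t => f (x + t) - ∑ k ∈ range (n + 1), ((k ! : ℝ)⁻¹ * t ^ k) • iteratedDeriv k f x)
      =o[𝓝 0] fun t => t ^ n := by
  obtain ⟨u, hu, hfu⟩ := hf.contDiffOn le_rfl (by simp)
  obtain ⟨ε, hε, hball⟩ := Metric.mem_nhds_iff.mp hu
  have htaylor := taylor_isLittleO (convex_ball x ε) (Metric.mem_ball_self hε) (hfu.mono hball)
  rw [nhdsWithin_eq_nhds.mpr (Metric.ball_mem_nhds x hε)] at htaylor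
  have hshift : Tendsto (fun t => x + t) (𝓝 0) (𝓝 x) := by
    simpa using (continuous_const_add x).tendsto 0
  refine (htaylor.comp_tendsto hshift).congr (fun t => ?_) (fun t => ?_)
  · simp only [Function.comp_apply, taylor_within_apply, add_sub_cancel_left,
      iteratedDerivWithin_of_isOpen Metric.isOpen_ball (Metric.mem_ball_self hε)]
  · simp

theorem Asymptotics.IsBigO.inv_smul_intervalIntegral {E : Type*} [NormedAddCommGroup E]
    [NormedSpace ℝ E] {f : ℝ → E} {m : ℕ} (hf : f =O[𝓝 0] fun t => t ^ m) :
    (fun d => d⁻¹ • ∫ t in (0)..d, f t) =O[𝓝 0] fun d => d ^ m := by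
  obtain ⟨c, hc, hfc⟩ := hf.exists_pos
  obtain ⟨ε, hε, hball⟩ := Metric.eventually_nhds_iff.mp hfc.bound
  refine IsBigO.of_bound c ?_
  filter_upwards [Metric.ball_mem_nhds 0 hε] with d hd
  have hint : ‖∫ t in (0)..d, f t‖ ≤ c * |d| ^ m * |d - 0| := by
    refine intervalIntegral.norm_integral_le_of_norm_le_const fun t ht => ?_
    have htd : |t| ≤ |d| := by
      simpa using Set.abs_sub_left_of_mem_uIcc (Set.uIoc_subset_uIcc ht)
    calc ‖f t‖ ≤ c * ‖t ^ m‖ := hball (lt_of_le_of_lt (by simpa using htd) hd)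
      _ ≤ c * |d| ^ m := by rw [norm_pow, Real.norm_eq_abs]; gcongr
  rw [sub_zero] at hint
  rw [norm_smul, norm_inv, norm_pow, Real.norm_eq_abs]
  rcases eq_or_ne d 0 with rfl | hd0
  · simp only [abs_zero, inv_zero, zero_mul]; positivity
  · calc |d|⁻¹ * ‖∫ t in (0)..d, f t‖ ≤ |d|⁻¹ * (c * |d| ^ m * |d|) := by gcongr
      _ = c * |d| ^ m := by field_simp

theorem eventually_intervalIntegrable_of_eventually_continuousAt {E : Type*}
    [NormedAddCommGroup E] {f : ℝ → E} {a : ℝ} (hf : ∀ᶠ y in 𝓝 a, ContinuousAt f y) :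
    ∀ᶠ b in 𝓝 a, IntervalIntegrable f volume a b := by
  obtain ⟨ε, hε, hball⟩ := Metric.eventually_nhds_iff_ball.mp hf
  filter_upwards [Metric.ball_mem_nhds a hε] with b hb
  refine ContinuousOn.intervalIntegrable fun y hy => (hball y ?_).continuousWithinAt
  exact (convex_ball a ε).ordConnected.uIcc_subset (Metric.mem_ball_self hε) hb hy

theorem Asymptotics.IsBigO.exists_pos_bound_nhdsGT_zero {E F : Type*} [Norm E]
    [SeminormedAddCommGroup F] {f : ℝ → E} {g : ℝ → F} (h : f =O[𝓝[>] 0] g) :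
    ∃ C > 0, ∃ d₀ > 0, ∀ d : ℝ, 0 < d → d < d₀ → ‖f d‖ ≤ C * ‖g d‖ := by
  obtain ⟨C, hC, hfg⟩ := h.exists_pos
  obtain ⟨d₀, hd₀, hsub⟩ := mem_nhdsGT_iff_exists_Ioo_subset.mp hfg.bound
  exact ⟨C, hC, d₀, hd₀, fun d hd hdd₀ => hsub ⟨hd, hdd₀⟩⟩

theorem ContDiffAt.isBigO_add_comp_neg_sub_taylor {h : ℝ → ℝ} {x : ℝ}
    (hh : ContDiffAt ℝ 6 h x) :
    (fun t => h (x + t) + h (x - t)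
        - (2 * h x + iteratedDeriv 2 h x * t ^ 2 + iteratedDeriv 4 h x / 12 * t ^ 4))
      =O[𝓝 0] fun t => t ^ 6 := by
  have hplus := hh.isLittleO_sub_taylor
  have hminus := (hplus.comp_tendsto (continuous_neg.tendsto' 0 0 neg_zero)).congr_right
    fun t => Even.neg_pow (by decide) t
  have hsixth : (fun t : ℝ => iteratedDeriv 6 h x / 360 * t ^ 6) =O[𝓝 0] fun t => t ^ 6 :=
    isBigO_const_mul_self _ _ _
  refine ((hplus.add hminus).isBigO.add hsixth).congr_left fun t => ?_
  simp only [Function.comp_apply, sum_range_succ, sum_range_zero, smul_eq_mul, iteratedDeriv_zero,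
    ← sub_eq_add_neg]
  norm_num [Nat.factorial]
  ring

theorem inv_mul_integral_symm_sub_quartic_eq {h : ℝ → ℝ} {x d : ℝ} (a b : ℝ) (hd : d ≠ 0)
    (hplus : IntervalIntegrable (fun t => h (x + t)) volume 0 d)
    (hminus : IntervalIntegrable (fun t => h (x - t)) volume 0 d) :
    d⁻¹ * ∫ t in (0)..d, (h (x + t) + h (x - t) - (2 * h x + a * t ^ 2 + b / 12 * t ^ 4)) =
      (1 / d) * (∫ ξ in (x - d)..x, h ξ) + (1 / d) * (∫ ξ in x..(x + d), h ξ)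
        - (2 * h x + a / 3 * d ^ 2 + b / 60 * d ^ 4) := by
  have hcont : ∀ p : ℝ → ℝ, Continuous p → IntervalIntegrable p volume 0 d :=
    fun p hp => hp.intervalIntegrable 0 d
  have hpoly : ∫ t in (0)..d, (2 * h x + a * t ^ 2 + b / 12 * t ^ 4) =
      2 * h x * d + a / 3 * d ^ 3 + b / 60 * d ^ 5 := by
    rw [integral_add (hcont _ (by fun_prop)) (hcont _ (by fun_prop)),
      integral_add (hcont _ (by fun_prop)) (hcont _ (by fun_prop))]
    simp [integral_pow]
    ring
  rw [integral_sub (hplus.add hminus) (hcont _ (by fun_prop)), integral_add hplus hminus, hpoly,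
    integral_comp_add_left, integral_comp_sub_left, add_zero, sub_zero]
  field_simp
  ring

theorem ContDiffAt.isBigO_cellAverages_sub {h : ℝ → ℝ} {x : ℝ} (hh : ContDiffAt ℝ 6 h x) :
    (fun d => (1 / d) * (∫ ξ in (x - d)..x, h ξ) + (1 / d) * (∫ ξ in x..(x + d), h ξ)
      - (2 * h x + iteratedDeriv 2 h x / 3 * d ^ 2 + iteratedDeriv 4 h x / 60 * d ^ 4))
      =O[𝓝[>] 0] fun d => d ^ 6 := by
  have hcont : ∀ᶠ y in 𝓝 x, ContinuousAt h y :=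
    (hh.eventually (by simp)).mono fun y hy => hy.continuousAt
  have hplus : ∀ᶠ d in 𝓝 0, IntervalIntegrable (fun t => h (x + t)) volume 0 d :=
    eventually_intervalIntegrable_of_eventually_continuousAt <|
      (((continuous_const_add x).tendsto' 0 x (add_zero x)).eventually hcont).mono
        fun t ht => ht.comp (continuous_const_add x).continuousAt
  have hminus : ∀ᶠ d in 𝓝 0, IntervalIntegrable (fun t => h (x - t)) volume 0 d :=
    eventually_intervalIntegrable_of_eventually_continuousAt <|
      (((continuous_sub_left x).tendsto' 0 x (sub_zero x)).eventually hcont).mono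
        fun t ht => ht.comp (continuous_sub_left x).continuousAt
  refine (hh.isBigO_add_comp_neg_sub_taylor.inv_smul_intervalIntegral.mono
    nhdsWithin_le_nhds).congr' ?_ EventuallyEq.rfl
  filter_upwards [self_mem_nhdsWithin, nhdsWithin_le_nhds hplus, nhdsWithin_le_nhds hminus]
    with d hd hp hm
  exact inv_mul_integral_symm_sub_quartic_eq _ _ hd.ne' hp hm

/-- Expansion of the approximate-coefficient k = 2 MQ-RBF reconstruction:
`(1/2 + (1/4)sΔx²)(h̄₀ + h̄₊) = h(x) + ((1/2)s·h + (1/6)h'')Δx²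
  + ((1/12)s·h'' + (1/120)h⁽⁴⁾)Δx⁴ + O(Δx⁶)`. -/
theorem stmt_7 (h : ℝ → ℝ) (x : ℝ) (hh : ContDiffAt ℝ 6 h x) (s : ℝ) :
    ∃ C > 0, ∃ d₀ > 0, ∀ d : ℝ, 0 < d → d < d₀ →
      |(1 / 2 + (1 / 4) * s * d ^ 2)
            * ((1 / d) * (∫ ξ in (x - d)..x, h ξ) + (1 / d) * ∫ ξ in x..(x + d), h ξ)
          - h x
          - ((1 / 2) * s * h x + (1 / 6) * iteratedDeriv 2 h x) * d ^ 2
          - ((1 / 12) * s * iteratedDeriv 2 h x + (1 / 120) * iteratedDeriv 4 h x) * d ^ 4|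
        ≤ C * d ^ 6 := by
  have hcoef : (fun d : ℝ => 1 / 2 + 1 / 4 * s * d ^ 2) =O[𝓝[>] 0] fun _ => (1 : ℝ) :=
    ((Continuous.tendsto (by fun_prop) 0).mono_left nhdsWithin_le_nhds).isBigO_one ℝ
  have herror := ((hcoef.mul hh.isBigO_cellAverages_sub).congr_right fun d => one_mul _).add
    (isBigO_const_mul_self (s * iteratedDeriv 4 h x / 240) (fun d : ℝ => d ^ 6) _)
  obtain ⟨C, hC, d₀, hd₀, hbound⟩ := herror.exists_pos_bound_nhdsGT_zero
  refine ⟨C, hC, d₀, hd₀, fun d hd hdd₀ => ?_⟩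
  convert hbound d hd hdd₀ using 1
  · rw [Real.norm_eq_abs]
    congr 1
    ring
  · rw [norm_pow, Real.norm_eq_abs, abs_of_pos hd]
end

section
/- Let h : ℝ → ℝ be four times continuously differentiable in a neighborhood of x ∈ ℝ with h(x) ≠ 0, and set s = −(1/3)·h''(x)/h(x). Then the approximate-coefficient MQ-RBF reconstruction is fourth-order accurate: (1/2 + (1/4)·s·Δx²)·(h̄₀ + h̄₊) = h(x) + O(Δx⁴); i.e., there exist C, Δx₀ > 0 such that |(1/2 + (1/4)sΔx²)(h̄₀ + h̄₊) − h(x)| ≤ C·Δx⁴ for all 0 < Δx < Δx₀. -/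
open Set Filter Topology Asymptotics Interval MeasureTheory

/-!
Write `h = T + R` with `T` the cubic Taylor polynomial of `h` at `x` and `R ξ = O((ξ - x) ^ 4)`.
Over the symmetric interval `[x - d, x + d]` the odd terms of `T` integrate to zero, so the sum of
the two cell averages is `2 h(x) + h''(x) d² / 3 + O(d⁴)`. Multiplying by `1/2 + s d² / 4` gives
`h(x) + (h''(x) / 6 + s h(x) / 2) d² + O(d⁴)`, and the `d²` coefficient vanishes exactly for
`s = -h''(x) / (3 h(x))`.
-/

theorem ContDiffAt.isBigO_sub_taylorWithinEval_univ {E : Type*} [NormedAddCommGroup E]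
    [NormedSpace ℝ E] {f : ℝ → E} {x₀ : ℝ} {n : ℕ} (hf : ContDiffAt ℝ (n + 1) f x₀) :
    (fun x ↦ f x - taylorWithinEval f n univ x₀ x) =O[𝓝 x₀] fun x ↦ (x - x₀) ^ (n + 1) := by
  obtain ⟨u, hu, hfu⟩ := hf.contDiffOn le_rfl (by simp)
  obtain ⟨ε, hε, hball⟩ := Metric.mem_nhds_iff.mp hu
  have htaylor (x : ℝ) : taylorWithinEval f (n + 1) (Metric.ball x₀ ε) x₀ x =
      taylorWithinEval f (n + 1) univ x₀ x := by
    simp only [taylor_within_apply, iteratedDerivWithin_univ]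
    refine Finset.sum_congr rfl fun k hk ↦ ?_
    rw [iteratedDerivWithin_eq_iteratedDeriv Metric.isOpen_ball.uniqueDiffOn
      (hf.of_le (by exact_mod_cast Finset.mem_range_succ_iff.mp hk)) (Metric.mem_ball_self hε)]
  -- Taylor's theorem at order `n + 1`, whose top-order term is itself `O((x - x₀) ^ (n + 1))`.
  have hlittle := taylor_isLittleO (convex_ball x₀ ε) (Metric.mem_ball_self hε)
    (hfu.mono hball) (n := n + 1)
  rw [nhdsWithin_eq_nhds.mpr (Metric.ball_mem_nhds x₀ hε)] at hlittle
  simp only [htaylor, taylorWithinEval_succ, iteratedDerivWithin_univ] at hlittle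
  have hlead (c : ℝ) (v : E) :
      (fun x ↦ (c * (x - x₀) ^ (n + 1)) • v) =O[𝓝 x₀] fun x ↦ (x - x₀) ^ (n + 1) :=
    isBigO_of_le' (c := ‖c‖ * ‖v‖) _ fun x ↦ by rw [norm_smul, norm_mul, mul_right_comm]
  refine (hlittle.isBigO.add (hlead ((n + 1) * n.factorial)⁻¹ (iteratedDeriv (n + 1) f x₀)))
    |>.congr_left fun x ↦ ?_
  rw [sub_add_eq_sub_sub, sub_add_cancel]

theorem taylorWithinEval_three_univ (f : ℝ → ℝ) (x₀ x : ℝ) :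
    taylorWithinEval f 3 univ x₀ x = f x₀ + deriv f x₀ * (x - x₀) +
      iteratedDeriv 2 f x₀ / 2 * (x - x₀) ^ 2 + iteratedDeriv 3 f x₀ / 6 * (x - x₀) ^ 3 := by
  simp only [taylor_within_apply, Finset.sum_range_succ, Finset.sum_range_zero,
    iteratedDerivWithin_univ, iteratedDeriv_zero, iteratedDeriv_one, smul_eq_mul, Nat.factorial]
  push_cast
  ring

theorem integral_cubic_sub_add (a b c e x d : ℝ) :
    ∫ ξ in (x - d)..(x + d), (a + b * (ξ - x) + c * (ξ - x) ^ 2 + e * (ξ - x) ^ 3) =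
      2 * a * d + 2 * c * d ^ 3 / 3 := by
  have hderiv (ξ : ℝ) : HasDerivAt
      (fun ξ ↦ a * (ξ - x) + b / 2 * (ξ - x) ^ 2 + c / 3 * (ξ - x) ^ 3 + e / 4 * (ξ - x) ^ 4)
      (a + b * (ξ - x) + c * (ξ - x) ^ 2 + e * (ξ - x) ^ 3) ξ := by
    have hshift := (hasDerivAt_id' ξ).sub_const x
    refine ((((hshift.const_mul a).add ((hshift.pow 2).const_mul (b / 2))).add
      ((hshift.pow 3).const_mul (c / 3))).add ((hshift.pow 4).const_mul (e / 4))).congr_deriv ?_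
    norm_num
    ring
  rw [intervalIntegral.integral_eq_sub_of_hasDerivAt (fun ξ _ ↦ hderiv ξ)
    (Continuous.intervalIntegrable (by fun_prop) _ _)]
  ring

theorem uIcc_sub_add_eq_closedBall (x d : ℝ) :
    uIcc (x - d) (x + d) = Metric.closedBall x |d| := by
  rcases le_total 0 d with hd | hd
  · rw [uIcc_of_le (by linarith), abs_of_nonneg hd, Real.closedBall_eq_Icc]
  · rw [uIcc_of_ge (by linarith), abs_of_nonpos hd, Real.closedBall_eq_Icc, sub_neg_eq_add,
      ← sub_eq_add_neg]

theorem integral_sub_add_eq_add_integral_sub_taylorWithinEval {f : ℝ → ℝ} {x d : ℝ}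
    (hf : ContinuousOn f (uIcc (x - d) (x + d))) :
    (∫ ξ in (x - d)..x, f ξ) + ∫ ξ in x..(x + d), f ξ =
      2 * f x * d + iteratedDeriv 2 f x / 3 * d ^ 3 +
        ∫ ξ in (x - d)..(x + d), (f ξ - taylorWithinEval f 3 univ x ξ) := by
  have hint {a b : ℝ} (ha : a ∈ uIcc (x - d) (x + d)) (hb : b ∈ uIcc (x - d) (x + d)) :
      IntervalIntegrable f volume a b :=
    (hf.mono (uIcc_subset_uIcc ha hb)).intervalIntegrable
  have hx : x ∈ uIcc (x - d) (x + d) := by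
    rw [uIcc_sub_add_eq_closedBall]
    exact Metric.mem_closedBall_self (abs_nonneg d)
  have htaylor : taylorWithinEval f 3 univ x = fun ξ ↦ f x + deriv f x * (ξ - x) +
      iteratedDeriv 2 f x / 2 * (ξ - x) ^ 2 + iteratedDeriv 3 f x / 6 * (ξ - x) ^ 3 :=
    funext (taylorWithinEval_three_univ f x)
  rw [intervalIntegral.integral_add_adjacent_intervals (hint left_mem_uIcc hx)
    (hint hx right_mem_uIcc), intervalIntegral.integral_sub (hint left_mem_uIcc right_mem_uIcc)
    (Continuous.intervalIntegrable (by rw [htaylor]; fun_prop) _ _), htaylor,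
    integral_cubic_sub_add]
  ring

theorem eventually_continuousOn_uIcc_sub_add {f : ℝ → ℝ} {x : ℝ}
    (hf : ∀ᶠ ξ in 𝓝 x, ContinuousAt f ξ) :
    ∀ᶠ d in 𝓝 0, ContinuousOn f (uIcc (x - d) (x + d)) := by
  obtain ⟨ε, hε, hcont⟩ := Metric.eventually_nhds_iff.mp hf
  filter_upwards [Metric.ball_mem_nhds 0 hε] with d hd ξ hξ
  rw [uIcc_sub_add_eq_closedBall] at hξ
  refine (hcont (hξ.trans_lt ?_)).continuousWithinAt
  simpa using hd

theorem isBigO_inv_smul_integral_sub_add {E : Type*} [NormedAddCommGroup E] [NormedSpace ℝ E]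
    {R : ℝ → E} {x : ℝ} {n : ℕ} (hR : R =O[𝓝 x] fun ξ ↦ (ξ - x) ^ n) :
    (fun d ↦ d⁻¹ • ∫ ξ in (x - d)..(x + d), R ξ) =O[𝓝 0] fun d ↦ d ^ n := by
  obtain ⟨c, hc, hRc⟩ := hR.exists_nonneg
  obtain ⟨ε, hε, hbound⟩ := Metric.eventually_nhds_iff.mp hRc.bound
  refine IsBigO.of_bound (2 * c) ?_
  filter_upwards [Metric.ball_mem_nhds 0 hε] with d hd
  have hle : ∀ ξ ∈ Ι (x - d) (x + d), ‖R ξ‖ ≤ c * |d| ^ n := by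
    intro ξ hξ
    have hξx : dist ξ x ≤ |d| := by
      rw [← Metric.mem_closedBall, ← uIcc_sub_add_eq_closedBall]
      exact uIoc_subset_uIcc hξ
    calc ‖R ξ‖ ≤ c * ‖(ξ - x) ^ n‖ := hbound (hξx.trans_lt (by simpa using hd))
      _ ≤ c * |d| ^ n := by
        rw [norm_pow, Real.norm_eq_abs, ← Real.dist_eq]
        gcongr
  calc ‖d⁻¹ • ∫ ξ in (x - d)..(x + d), R ξ‖
      ≤ |d|⁻¹ * (c * |d| ^ n * |x + d - (x - d)|) := by
        rw [norm_smul, norm_inv, Real.norm_eq_abs]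
        gcongr
        exact intervalIntegral.norm_integral_le_of_norm_le_const hle
    _ = 2 * c * ‖d ^ n‖ * (|d|⁻¹ * |d|) := by
        rw [norm_pow, Real.norm_eq_abs, show x + d - (x - d) = 2 * d by ring, abs_mul,
          abs_two]
        ring
    _ ≤ 2 * c * ‖d ^ n‖ := by
        refine mul_le_of_le_one_right (by positivity) ?_
        rcases eq_or_ne d 0 with rfl | hd0
        · simp
        · rw [inv_mul_cancel₀ (abs_ne_zero.mpr hd0)]

theorem exists_bound_of_isBigO_nhdsGT {f : ℝ → ℝ} {n : ℕ} (hf : f =O[𝓝[>] 0] fun d ↦ d ^ n) :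
    ∃ C > 0, ∃ d₀ > 0, ∀ d : ℝ, 0 < d → d < d₀ → |f d| ≤ C * d ^ n := by
  obtain ⟨C, hC, hfC⟩ := hf.exists_pos
  obtain ⟨d₀, hd₀, hbound⟩ := (nhdsGT_basis 0).eventually_iff.mp hfC.bound
  refine ⟨C, hC, d₀, hd₀, fun d hd hdd₀ ↦ ?_⟩
  simpa [abs_of_pos hd] using hbound ⟨hd, hdd₀⟩

/-- With the adaptive shape parameter `s = −(1/3)h''(x)/h(x)` the
approximate-coefficient k = 2 MQ-RBF reconstruction is fourth-order accurate. -/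
theorem stmt_8 (h : ℝ → ℝ) (x : ℝ) (hh : ContDiffAt ℝ 4 h x) (hx : h x ≠ 0) :
    ∃ C > 0, ∃ d₀ > 0, ∀ d : ℝ, 0 < d → d < d₀ →
      |(1 / 2 + (1 / 4) * (-(1 / 3) * iteratedDeriv 2 h x / h x) * d ^ 2)
            * ((1 / d) * (∫ ξ in (x - d)..x, h ξ) + (1 / d) * ∫ ξ in x..(x + d), h ξ)
          - h x|
        ≤ C * d ^ 4 := by
  have hremainder : (fun d ↦ d⁻¹ * ∫ ξ in (x - d)..(x + d), (h ξ - taylorWithinEval h 3 univ x ξ))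
      =O[𝓝 0] fun d ↦ d ^ 4 :=
    isBigO_inv_smul_integral_sub_add (hh.isBigO_sub_taylorWithinEval_univ (n := 3))
  have hcont := eventually_continuousOn_uIcc_sub_add
    ((hh.eventually (by simp)).mono fun _ hξ ↦ hξ.continuousAt)
  have hshape : -(1 / 3) * iteratedDeriv 2 h x / h x * h x = -(1 / 3) * iteratedDeriv 2 h x :=
    div_mul_cancel₀ _ hx
  generalize -(1 / 3) * iteratedDeriv 2 h x / h x = s at hshape ⊢
  have herror : (fun d ↦ s * iteratedDeriv 2 h x / 12 * d ^ 4 +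
        (1 / 2 + 1 / 4 * s * d ^ 2) *
          (d⁻¹ * ∫ ξ in (x - d)..(x + d), (h ξ - taylorWithinEval h 3 univ x ξ)))
      =ᶠ[𝓝[>] 0] fun d ↦ (1 / 2 + 1 / 4 * s * d ^ 2) *
          ((1 / d) * (∫ ξ in (x - d)..x, h ξ) + (1 / d) * ∫ ξ in x..(x + d), h ξ) - h x := by
    filter_upwards [self_mem_nhdsWithin, nhdsWithin_le_nhds hcont] with d (hd : 0 < d) hd'
    rw [← mul_add, integral_sub_add_eq_add_integral_sub_taylorWithinEval hd']
    linear_combination -(d ^ 2 / 2) * hshape - (1 / 2 + 1 / 4 * s * d ^ 2) *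
      (2 * h x + iteratedDeriv 2 h x / 3 * d ^ 2) * mul_inv_cancel₀ hd.ne'
  refine exists_bound_of_isBigO_nhdsGT (IsBigO.congr' ?_ herror EventuallyEq.rfl)
  have hbounded : (fun d : ℝ ↦ 1 / 2 + 1 / 4 * s * d ^ 2) =O[𝓝[>] 0] fun _ ↦ (1 : ℝ) :=
    ((by fun_prop : Continuous fun d : ℝ ↦ 1 / 2 + 1 / 4 * s * d ^ 2).tendsto 0).mono_left
      nhdsWithin_le_nhds |>.isBigO_one ℝ
  refine ((isBigO_refl _ _).const_mul_left _).add ?_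
  simpa using hbounded.mul (hremainder.mono nhdsWithin_le_nhds)
end

section
/- Let h : ℝ → ℝ be four times continuously differentiable in a neighborhood of x ∈ ℝ with h(x) ≠ 0, and set s = −(1/3)·h''(x)/h(x). Then the exact-coefficient MQ-RBF reconstruction is fourth-order accurate: with c(η) = (√(4η + 1) + 1)/(4·√(1 + η)), there exist C, Δx₀ > 0 such that for all 0 < Δx < Δx₀ (in particular small enough that 1 + s·Δx² > 0 and 1 + 4s·Δx² > 0), |c(s·Δx²)·(h̄₀ + h̄₊) − h(x)| ≤ C·Δx⁴. -/
/-!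
Let `Φ d = ∫_{x-d}^{x+d} h`. Taylor expansion of the primitive of `h` at `x`, evaluated at
`x ± d`, gives `Φ d = 2 h(x) d + h''(x) d³ / 3 + O(d⁵)`. The choice of `s` rewrites the cubic
term as `-η h(x) d` with `η = s d²`, so `Φ d / d = (2 - η) h(x) + O(d⁴)`. Expanding both square
roots to second order shows that the MQ coefficient `mqCoeff η = c(η)` satisfies
`c(η) (2 - η) = 1 + O(η²)`, hence `c(η) Φ d / d = h(x) + O(d⁴)`.
-/

open Set Filter Topology Asymptotics Nat Real

section Primitive

variable {E : Type*} [NormedAddCommGroup E] [NormedSpace ℝ E]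

theorem ContDiffAt.isBigO_sub_taylorWithinEval {f : ℝ → E} {x₀ : ℝ} {n : ℕ}
    (hf : ContDiffAt ℝ (n + 1) f x₀) :
    (fun x ↦ f x - taylorWithinEval f n univ x₀ x)
      =O[𝓝 x₀] fun x ↦ (x - x₀) ^ (n + 1) := by
  obtain ⟨u, hu, hfu⟩ := hf.contDiffOn le_rfl (by simp)
  obtain ⟨ε, hε, hball⟩ := Metric.mem_nhds_iff.mp hu
  set B := Metric.ball x₀ ε
  have hlo := taylor_isLittleO (convex_ball x₀ ε) (Metric.mem_ball_self hε)
    (hfu.mono hball : ContDiffOn ℝ ((n + 1 : ℕ) : WithTop ℕ∞) f B)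
  rw [nhdsWithin_eq_nhds.mpr (Metric.ball_mem_nhds x₀ hε)] at hlo
  have hball_univ : taylorWithinEval f n B x₀ = taylorWithinEval f n univ x₀ := by
    ext x
    simp only [taylor_within_apply, iteratedDerivWithin_univ]
    refine Finset.sum_congr rfl fun k _ ↦ ?_
    rw [iteratedDerivWithin_of_isOpen Metric.isOpen_ball (Metric.mem_ball_self hε)]
  set v := iteratedDerivWithin (n + 1) f B x₀
  have hlast : (fun x ↦ (((n + 1 : ℝ) * n !)⁻¹ * (x - x₀) ^ (n + 1)) • v)
      =O[𝓝 x₀] fun x ↦ (x - x₀) ^ (n + 1) :=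
    .of_bound (‖((n + 1 : ℝ) * n !)⁻¹‖ * ‖v‖) <|
      .of_forall fun x ↦ by rw [norm_smul, norm_mul, mul_right_comm]
  refine (hlo.isBigO.add hlast).congr_left fun x ↦ ?_
  rw [taylorWithinEval_succ, hball_univ]
  abel

variable [CompleteSpace E] {f : ℝ → E} {a : ℝ}

theorem eventually_hasDerivAt_intervalIntegral (hf : ∀ᶠ y in 𝓝 a, ContinuousAt f y) :
    ∀ᶠ y in 𝓝 a, HasDerivAt (fun z ↦ ∫ t in a..z, f t) (f y) y := by
  obtain ⟨ε, hε, hball⟩ := Metric.eventually_nhds_iff_ball.mp hf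
  have hcont : ContinuousOn f (Metric.ball a ε) := fun y hy ↦ (hball y hy).continuousWithinAt
  filter_upwards [Metric.ball_mem_nhds a hε] with y hy
  refine intervalIntegral.integral_hasDerivAt_right ?_
    (hcont.stronglyMeasurableAtFilter Metric.isOpen_ball y hy) (hball y hy)
  exact (hcont.mono <| (convex_ball a ε).ordConnected.uIcc_subset
    (Metric.mem_ball_self hε) hy).intervalIntegrable

theorem ContDiffAt.intervalIntegral {n : ℕ} (hf : ContDiffAt ℝ n f a) :
    ContDiffAt ℝ (n + 1) (fun z ↦ ∫ t in a..z, f t) a := by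
  refine contDiffAt_succ_iff_hasFDerivAt.mpr
    ⟨fun y ↦ (1 : ℝ →L[ℝ] ℝ).smulRight (f y), ?_, contDiffAt_const.smulRight hf⟩
  exact ⟨_, eventually_hasDerivAt_intervalIntegral ((hf.eventually (by simp)).mono
    fun y hy ↦ hy.continuousAt), fun y hy ↦ hy.hasFDerivAt⟩

theorem iteratedDeriv_succ_intervalIntegral (hf : ∀ᶠ y in 𝓝 a, ContinuousAt f y) (k : ℕ) :
    iteratedDeriv (k + 1) (fun z ↦ ∫ t in a..z, f t) a = iteratedDeriv k f a := by
  rw [iteratedDeriv_succ']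
  have hderiv : deriv (fun z ↦ ∫ t in a..z, f t) =ᶠ[𝓝 a] f :=
    (eventually_hasDerivAt_intervalIntegral hf).mono fun y hy ↦ hy.deriv
  exact hderiv.iteratedDeriv_eq k

end Primitive

theorem ContDiffAt.isBigO_integral_add_integral_sub {h : ℝ → ℝ} {x : ℝ}
    (hh : ContDiffAt ℝ 4 h x) :
    (fun d ↦ (∫ ξ in (x - d)..x, h ξ) + (∫ ξ in x..(x + d), h ξ)
      - (2 * h x * d + iteratedDeriv 2 h x / 3 * d ^ 3)) =O[𝓝 0] fun d ↦ d ^ 5 := by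
  set F : ℝ → ℝ := fun z ↦ ∫ t in x..z, h t
  have hcont : ∀ᶠ y in 𝓝 x, ContinuousAt h y :=
    (hh.eventually (by simp)).mono fun y hy ↦ hy.continuousAt
  have hT := (hh.intervalIntegral (n := 4)).isBigO_sub_taylorWithinEval (n := 4)
  have hplus : (fun d ↦ F (x + d) - taylorWithinEval F 4 univ x (x + d)) =O[𝓝 0] (· ^ 5) :=
    (hT.comp_tendsto ((continuous_const_add x).tendsto' 0 x (add_zero x))).congr_right
      fun d ↦ by simp
  have hminus : (fun d ↦ F (x - d) - taylorWithinEval F 4 univ x (x - d)) =O[𝓝 0] (· ^ 5) :=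
    isBigO_neg_right.mp <|
      (hT.comp_tendsto ((continuous_sub_left x).tendsto' 0 x (sub_zero x))).congr_right
        fun d ↦ by simp; ring
  have hF : ∀ k, iteratedDeriv (k + 1) F x = iteratedDeriv k h x :=
    iteratedDeriv_succ_intervalIntegral hcont
  have htaylor : ∀ y, taylorWithinEval F 4 univ x y = h x * (y - x)
      + deriv h x / 2 * (y - x) ^ 2 + iteratedDeriv 2 h x / 6 * (y - x) ^ 3
      + iteratedDeriv 3 h x / 24 * (y - x) ^ 4 := fun y ↦ by
    simp only [taylor_within_apply, iteratedDerivWithin_univ, Finset.sum_range_succ,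
      Finset.sum_range_zero, hF, iteratedDeriv_zero, iteratedDeriv_one, smul_eq_mul, F,
      intervalIntegral.integral_same]
    norm_num [factorial]
    ring
  refine (hplus.sub hminus).congr_left fun d ↦ ?_
  simp only [htaylor, F, intervalIntegral.integral_symm x (x - d)]
  ring

theorem abs_sqrt_one_add_sub_le {t : ℝ} (ht : -1 ≤ t) :
    |√(1 + t) - (1 + t / 2)| ≤ t ^ 2 / 2 := by
  have hsq : √(1 + t) ^ 2 = 1 + t := sq_sqrt (by linarith)
  have hnonneg : 0 ≤ √(1 + t) := sqrt_nonneg _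
  rw [abs_le]
  constructor <;> nlinarith [sq_nonneg t, sq_nonneg (√(1 + t) - 1)]

noncomputable def mqCoeff (η : ℝ) : ℝ := (√(4 * η + 1) + 1) / (4 * √(1 + η))

section MQCoeff

variable {η : ℝ}

theorem abs_mqCoeff_le_one (hη : |η| ≤ 1 / 8) : |mqCoeff η| ≤ 1 := by
  obtain ⟨hη₁, hη₂⟩ := abs_le.mp hη
  have ha := abs_le.mp (abs_sqrt_one_add_sub_le (t := 4 * η) (by linarith))
  have hb := abs_le.mp (abs_sqrt_one_add_sub_le (t := η) (by linarith))
  have hb₀ : 0 < √(1 + η) := by nlinarith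
  rw [mqCoeff, add_comm (4 * η), abs_div, abs_of_nonneg (by positivity),
    abs_of_pos (by positivity), div_le_one (by positivity)]
  nlinarith

theorem abs_mqCoeff_mul_two_sub_sub_one_le (hη : |η| ≤ 1 / 8) :
    |mqCoeff η * (2 - η) - 1| ≤ 6 * η ^ 2 := by
  obtain ⟨hη₁, hη₂⟩ := abs_le.mp hη
  have ha := abs_le.mp (abs_sqrt_one_add_sub_le (t := 4 * η) (by linarith))
  have hb := abs_le.mp (abs_sqrt_one_add_sub_le (t := η) (by linarith))
  rw [mqCoeff, add_comm (4 * η)]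
  set a := √(1 + 4 * η)
  set b := √(1 + η)
  have hb₀ : 9 / 10 ≤ b := by nlinarith
  -- `(a + 1) (2 - η) - 4 b = -2 η² + (2 - η) (a - 1 - 2 η) - 4 (b - 1 - η / 2)`
  have hnum : |(a + 1) * (2 - η) - 4 * b| ≤ 21 * η ^ 2 := by
    rw [abs_le]; constructor <;> nlinarith
  have h4b : 0 < 4 * b := by linarith
  rw [div_mul_eq_mul_div, div_sub_one h4b.ne', abs_div, abs_of_pos h4b, div_le_iff₀ h4b]
  nlinarith [mul_nonneg (sq_nonneg η) (sub_nonneg.mpr hb₀)]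

theorem abs_mqCoeff_mul_div_sub_le {a I M d : ℝ} (hd : 0 < d) (hη : |η| ≤ 1 / 8)
    (hI : |I - (2 - η) * a * d| ≤ M * d ^ 5) :
    |mqCoeff η * (I / d) - a| ≤ M * d ^ 4 + 6 * η ^ 2 * |a| := by
  have hsplit : mqCoeff η * (I / d) - a
      = mqCoeff η * ((I - (2 - η) * a * d) / d) + (mqCoeff η * (2 - η) - 1) * a := by
    field_simp
    ring
  have hfirst : |mqCoeff η * ((I - (2 - η) * a * d) / d)| ≤ M * d ^ 4 := by
    rw [abs_mul, abs_div, abs_of_pos hd]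
    calc |mqCoeff η| * (|I - (2 - η) * a * d| / d) ≤ 1 * (M * d ^ 5 / d) := by
          gcongr
          exact abs_mqCoeff_le_one hη
      _ = M * d ^ 4 := by field_simp
  have hsecond : |(mqCoeff η * (2 - η) - 1) * a| ≤ 6 * η ^ 2 * |a| := by
    rw [abs_mul]
    exact mul_le_mul_of_nonneg_right (abs_mqCoeff_mul_two_sub_sub_one_le hη) (abs_nonneg a)
  rw [hsplit]
  exact (abs_add_le _ _).trans (add_le_add hfirst hsecond)

end MQCoeff

/-- With the adaptive shape parameter `s = −(1/3)h''(x)/h(x)` the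
exact-coefficient k = 2 MQ-RBF reconstruction is fourth-order accurate. -/
theorem stmt_9 (h : ℝ → ℝ) (x : ℝ) (hh : ContDiffAt ℝ 4 h x) (hx : h x ≠ 0) :
    ∃ C > 0, ∃ d₀ > 0, ∀ d : ℝ, 0 < d → d < d₀ →
      1 + (-(1 / 3) * iteratedDeriv 2 h x / h x) * d ^ 2 > 0 ∧
      1 + 4 * (-(1 / 3) * iteratedDeriv 2 h x / h x) * d ^ 2 > 0 ∧
      |(Real.sqrt (4 * (-(1 / 3) * iteratedDeriv 2 h x / h x * d ^ 2) + 1) + 1)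
            / (4 * Real.sqrt (1 + -(1 / 3) * iteratedDeriv 2 h x / h x * d ^ 2))
            * ((1 / d) * (∫ ξ in (x - d)..x, h ξ) + (1 / d) * ∫ ξ in x..(x + d), h ξ)
          - h x|
        ≤ C * d ^ 4 := by
  set s : ℝ := -(1 / 3) * iteratedDeriv 2 h x / h x with hs
  obtain ⟨M, hM, hTaylor⟩ := hh.isBigO_integral_add_integral_sub.exists_pos
  have hsmall : ∀ᶠ d in 𝓝 (0 : ℝ), |s * d ^ 2| ≤ 1 / 8 := by
    have : Tendsto (fun d : ℝ ↦ |s * d ^ 2|) (𝓝 0) (𝓝 0) := by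
      simpa using (continuous_const.mul (continuous_pow 2)).abs.tendsto (0 : ℝ)
    exact this.eventually (ge_mem_nhds (by norm_num))
  obtain ⟨d₀, hd₀, hnear⟩ := Metric.eventually_nhds_iff.mp (hTaylor.bound.and hsmall)
  refine ⟨M + 6 * s ^ 2 * |h x|, by positivity, d₀, hd₀, fun d hd hdd₀ ↦ ?_⟩
  obtain ⟨hI, hη⟩ := hnear (by rwa [Real.dist_eq, sub_zero, abs_of_pos hd])
  have hη_lower := (abs_le.mp hη).1
  refine ⟨by linarith, by linarith, ?_⟩
  have hP : 2 * h x * d + iteratedDeriv 2 h x / 3 * d ^ 3 = (2 - s * d ^ 2) * h x * d := by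
    rw [hs]; field_simp; ring
  rw [Real.norm_eq_abs, Real.norm_eq_abs, abs_of_pos (pow_pos hd 5), hP] at hI
  calc _ = |mqCoeff (s * d ^ 2) * (((∫ ξ in (x - d)..x, h ξ) + ∫ ξ in x..(x + d), h ξ) / d)
          - h x| := by rw [mqCoeff, ← mul_add, one_div_mul_eq_div]
    _ ≤ M * d ^ 4 + 6 * (s * d ^ 2) ^ 2 * |h x| := abs_mqCoeff_mul_div_sub_le hd hη hI
    _ = (M + 6 * s ^ 2 * |h x|) * d ^ 4 := by ring
end

section
/- Let h : ℝ → ℝ be four times continuously differentiable in a neighborhood of x ∈ ℝ. Then the third-order flux approximation from three consecutive cell averages satisfies −(1/6)·h̄₋ + (5/6)·h̄₀ + (1/3)·h̄₊ = h(x) + (1/12)·h'''(x)·Δx³ + O(Δx⁴). -/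
/-!
The stencil reproduces any cubic `∑ cₖ (ξ - x)ᵏ` up to `c₃ Δx³ / 2`: the constant is recovered
exactly and the first and second moments cancel. Subtracting the cubic Taylor polynomial of `h`
at `x` leaves a remainder `O(|ξ - x|⁴) = O(Δx⁴)` on `[x - 2Δx, x + Δx]`, and the stencil weights
have absolute sum `4 / 3`, so the remainder contributes `O(Δx⁴)`.
-/

open Set Filter Topology Asymptotics MeasureTheory Nat

theorem ContDiffAt.isBigO_sub_taylor {f : ℝ → ℝ} {x : ℝ} {n : ℕ}
    (hf : ContDiffAt ℝ (n + 1 : ℕ) f x) :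
    (fun y ↦ f y - ∑ k ∈ Finset.range (n + 1), iteratedDeriv k f x / k ! * (y - x) ^ k)
      =O[𝓝 x] fun y ↦ (y - x) ^ (n + 1) := by
  obtain ⟨u, hu, hfu⟩ := hf.contDiffOn le_rfl (by simp)
  obtain ⟨r, hr, hball⟩ := Metric.mem_nhds_iff.1 hu
  have hx : x ∈ Metric.ball x r := Metric.mem_ball_self hr
  have hT : ∀ m y, taylorWithinEval f m (Metric.ball x r) x y
      = ∑ k ∈ Finset.range (m + 1), iteratedDeriv k f x / k ! * (y - x) ^ k := by
    intro m y
    rw [taylor_within_apply]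
    refine Finset.sum_congr rfl fun k _ ↦ ?_
    rw [iteratedDerivWithin_of_isOpen Metric.isOpen_ball hx, smul_eq_mul]
    ring
  have hsmall := taylor_isLittleO (convex_ball x r) hx (hfu.mono hball)
  rw [Metric.isOpen_ball.nhdsWithin_eq hx] at hsmall
  refine (hsmall.isBigO.add (isBigO_const_mul_self
    (iteratedDeriv (n + 1) f x / (n + 1)! ) (fun y ↦ (y - x) ^ (n + 1)) _)).congr_left fun y ↦ ?_
  rw [hT, Finset.sum_range_succ]
  ring

noncomputable def fluxStencil (h : ℝ → ℝ) (x d : ℝ) : ℝ :=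
  -(1 / 6) * ((1 / d) * ∫ ξ in (x - 2 * d)..(x - d), h ξ)
    + (5 / 6) * ((1 / d) * ∫ ξ in (x - d)..x, h ξ)
    + (1 / 3) * ((1 / d) * ∫ ξ in x..(x + d), h ξ)

theorem integral_sum_mul_sub_pow (c : ℕ → ℝ) (n : ℕ) (x a b : ℝ) :
    ∫ ξ in a..b, ∑ k ∈ Finset.range n, c k * (ξ - x) ^ k
      = ∑ k ∈ Finset.range n, c k * ((b - x) ^ (k + 1) - (a - x) ^ (k + 1)) / (k + 1) := by
  rw [intervalIntegral.integral_finsetSum fun k _ ↦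
    (by fun_prop : Continuous fun ξ ↦ c k * (ξ - x) ^ k).intervalIntegrable a b]
  refine Finset.sum_congr rfl fun k _ ↦ ?_
  rw [intervalIntegral.integral_const_mul, intervalIntegral.integral_comp_sub_right (· ^ k),
    integral_pow, mul_div_assoc]

theorem fluxStencil_cubic (c : ℕ → ℝ) (x : ℝ) {d : ℝ} (hd : d ≠ 0) :
    fluxStencil (fun ξ ↦ ∑ k ∈ Finset.range 4, c k * (ξ - x) ^ k) x d
      = c 0 + c 3 * d ^ 3 / 2 := by
  simp only [fluxStencil, integral_sum_mul_sub_pow]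
  simp only [Finset.sum_range_succ, Finset.sum_range_zero]
  field_simp
  ring

theorem fluxStencil_sub {f g : ℝ → ℝ} {x d : ℝ} (hd : 0 ≤ d)
    (hf : IntervalIntegrable f volume (x - 2 * d) (x + d))
    (hg : IntervalIntegrable g volume (x - 2 * d) (x + d)) :
    fluxStencil (fun ξ ↦ f ξ - g ξ) x d = fluxStencil f x d - fluxStencil g x d := by
  have cell : ∀ a b, x - 2 * d ≤ a → a ≤ b → b ≤ x + d →
      ∫ ξ in a..b, f ξ - g ξ = (∫ ξ in a..b, f ξ) - ∫ ξ in a..b, g ξ := by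
    intro a b ha hab hb
    have hsub : uIcc a b ⊆ uIcc (x - 2 * d) (x + d) :=
      uIcc_subset_uIcc (mem_uIcc_of_le ha (hab.trans hb)) (mem_uIcc_of_le (ha.trans hab) hb)
    exact intervalIntegral.integral_sub (hf.mono_set hsub) (hg.mono_set hsub)
  rw [fluxStencil, cell _ _ le_rfl (by linarith) (by linarith),
    cell _ _ (by linarith) (by linarith) (by linarith),
    cell _ _ (by linarith) (by linarith) le_rfl, fluxStencil, fluxStencil]
  ring

theorem abs_fluxStencil_le {f : ℝ → ℝ} {x d K : ℝ} (hd : 0 < d)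
    (hf : ∀ ξ ∈ Icc (x - 2 * d) (x + d), |f ξ| ≤ K) :
    |fluxStencil f x d| ≤ 4 / 3 * K := by
  have cell : ∀ a b, b - a = d → x - 2 * d ≤ a → b ≤ x + d → |(1 / d) * ∫ ξ in a..b, f ξ| ≤ K := by
    intro a b hba ha hb
    have hint : ‖∫ ξ in a..b, f ξ‖ ≤ K * |b - a| :=
      intervalIntegral.norm_integral_le_of_norm_le_const fun ξ hξ ↦ by
        rw [uIoc_of_le (by linarith)] at hξ
        exact hf ξ ⟨by linarith [hξ.1], by linarith [hξ.2]⟩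
    rw [Real.norm_eq_abs, hba, abs_of_pos hd] at hint
    rw [abs_mul, abs_of_pos (one_div_pos.2 hd), one_div_mul_eq_div, div_le_iff₀ hd]
    linarith
  have hleft := abs_le.1 (cell (x - 2 * d) (x - d) (by ring) le_rfl (by linarith))
  have hmid := abs_le.1 (cell (x - d) x (by ring) (by linarith) (by linarith))
  have hright := abs_le.1 (cell x (x + d) (by ring) (by linarith) le_rfl)
  rw [fluxStencil, abs_le]
  constructor <;> linarith [hleft.1, hleft.2, hmid.1, hmid.2, hright.1, hright.2]

/-- Third-order flux approximation from three consecutive cell averages: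
`−(1/6)h̄₋ + (5/6)h̄₀ + (1/3)h̄₊ = h(x) + (1/12)h'''(x)Δx³ + O(Δx⁴)`. -/
theorem stmt_10 (h : ℝ → ℝ) (x : ℝ) (hh : ContDiffAt ℝ 4 h x) :
    ∃ C > 0, ∃ d₀ > 0, ∀ d : ℝ, 0 < d → d < d₀ →
      |-(1 / 6) * ((1 / d) * ∫ ξ in (x - 2 * d)..(x - d), h ξ)
          + (5 / 6) * ((1 / d) * ∫ ξ in (x - d)..x, h ξ)
          + (1 / 3) * ((1 / d) * ∫ ξ in x..(x + d), h ξ)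
          - h x - (1 / 12) * iteratedDeriv 3 h x * d ^ 3|
        ≤ C * d ^ 4 := by
  set P : ℝ → ℝ := fun ξ ↦ ∑ k ∈ Finset.range 4, iteratedDeriv k h x / k ! * (ξ - x) ^ k
  obtain ⟨c, hc, hP⟩ := (ContDiffAt.isBigO_sub_taylor (n := 3) hh).exists_pos
  obtain ⟨ε, hε, hnear⟩ := Metric.eventually_nhds_iff.1 (hP.bound.and (hh.eventually (by simp)))
  refine ⟨64 / 3 * c, by positivity, ε / 2, by positivity, fun d hd hdε ↦ ?_⟩
  have hcell : ∀ ξ ∈ Icc (x - 2 * d) (x + d), |ξ - x| ≤ 2 * d ∧ dist ξ x < ε := by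
    intro ξ hξ
    have : |ξ - x| ≤ 2 * d := abs_le.2 ⟨by linarith [hξ.1], by linarith [hξ.2]⟩
    exact ⟨this, by rw [Real.dist_eq]; linarith⟩
  have hint : IntervalIntegrable h volume (x - 2 * d) (x + d) :=
    ContinuousOn.intervalIntegrable fun ξ hξ ↦ by
      rw [uIcc_of_le (by linarith)] at hξ
      exact (hnear (hcell ξ hξ).2).2.continuousAt.continuousWithinAt
  have hremainder : ∀ ξ ∈ Icc (x - 2 * d) (x + d), |h ξ - P ξ| ≤ c * (2 * d) ^ 4 := by
    intro ξ hξ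
    have hξP := (hnear (hcell ξ hξ).2).1
    simp only [Real.norm_eq_abs, abs_pow] at hξP
    exact hξP.trans (by gcongr; exact (hcell ξ hξ).1)
  calc _ = |fluxStencil (fun ξ ↦ h ξ - P ξ) x d| := by
        rw [fluxStencil_sub hd.le hint ((by fun_prop : Continuous P).intervalIntegrable _ _),
          fluxStencil_cubic _ _ hd.ne', iteratedDeriv_zero]
        congr 1
        simp only [fluxStencil, factorial]
        push_cast
        ring
    _ ≤ 4 / 3 * (c * (2 * d) ^ 4) := abs_fluxStencil_le hd hremainder
    _ = 64 / 3 * c * d ^ 4 := by ring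
end
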